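/- Let V be a vector space with basis {x_1,...,x_n}, σ a linear bijection of V, and w ∈ V^{⊗d} a twisted superpotential with respect to σ such that w = Σ_i x_i ⊗ y_i with y_1,...,y_n ∈ V^{⊗(d-1)} linearly independent. Let ŵ = Σ_{i=0}^{d}(-1)^i τ_{d+1}^i(id⊗σ^{⊗i}⊗id^{⊗(d-i)})(z⊗w) ∈ (V⊕kz)^{⊗(d+1)}. Then the span of the partial derivatives ∂_Ψ(ŵ) = (id⊗id⊗Ψ)(ŵ) over all Ψ ∈ (V*)^{⊗(d-1)} equals span{z⊗x_i - σ(x_i)⊗z : i = 1,...,n} inside (V⊕kz)⊗(V⊕kz). -/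

import Mathlib

/-- Coefficient model of `V^{⊗d}` for `V = k^n` with its standard basis:
a tensor is given by its coefficient function on `d`-tuples of basis indices. -/
abbrev Tens (k : Type*) (n d : ℕ) := (Fin d → Fin n) → k

/-- The linear map on `V^{⊗d}` permuting the tensor factors according to `s`. -/
def permMap (k : Type*) [Field k] (n d : ℕ) (s : Equiv.Perm (Fin d)) :
    Tens k n d →ₗ[k] Tens k n d where
  toFun w := fun i => w (i ∘ s)
  map_add' _ _ := rfl
  map_smul' _ _ := rfl

/-- The swap `τ` of the adjacent tensor factors at positions `j, j+1`
(the identity if out of range). -/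
def adjSwap (d j : ℕ) : Equiv.Perm (Fin d) :=
  if h : j + 1 < d then Equiv.swap ⟨j, Nat.lt_of_succ_lt h⟩ ⟨j + 1, h⟩ else 1

/-- `tauMapFrom k n d a m` is `1^{⊗a} ⊗ τ_{d-a}^{m}` acting on `V^{⊗d}`, defined
recursively as in the paper: `τ^0 = id`, `τ^1 = τ⊗1⋯`, and
`τ^{m+1} = (1^{⊗(a+m)} ⊗ τ ⊗ 1^{⋯}) ∘ τ^m` (swap at positions `a+m, a+m+1`).
In particular `tauMapFrom k n d 0 m = τ_d^m`. -/
def tauMapFrom (k : Type*) [Field k] (n d a : ℕ) : ℕ → (Tens k n d →ₗ[k] Tens k n d)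
  | 0 => LinearMap.id
  | (m + 1) => (permMap k n d (adjSwap d (a + m))).comp (tauMapFrom k n d a m)

/-- `blockMap k n d S P` applies the matrix `S` (an endomorphism of `V = k^n` in the
standard basis, `σ(e_j) = Σ_i S i j e_i`) to every tensor factor at a position
satisfying `P`, and the identity to all other factors.  E.g. `P = (· = 0)` gives
`σ ⊗ 1^{⊗(d-1)}` and `P = ⊤` gives `σ^{⊗d}`. -/
noncomputable def blockMap (k : Type*) [Field k] (n d : ℕ)
    (S : Matrix (Fin n) (Fin n) k) (P : Fin d → Prop) [DecidablePred P] :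
    Tens k n d →ₗ[k] Tens k n d where
  toFun w := fun i => ∑ j : Fin d → Fin n,
    (∏ p, if P p then S (i p) (j p) else if i p = j p then 1 else 0) * w j
  map_add' w₁ w₂ := by
    funext i
    simp [mul_add, Finset.sum_add_distrib]
  map_smul' c w := by
    funext i
    simp only [Pi.smul_apply, smul_eq_mul, RingHom.id_apply]
    rw [Finset.mul_sum]
    exact Finset.sum_congr rfl fun j _ => by ring

/-- Extension of the matrix of `σ : V → V` to `V̂ = kz ⊕ V`, acting as the identity on
the new basis vector `z` (index `0`) and as `σ` on `V` (indices `1,…,n`). -/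
noncomputable def extMatrix (k : Type*) [Field k] (n : ℕ) (S : Matrix (Fin n) (Fin n) k) :
    Matrix (Fin (n + 1)) (Fin (n + 1)) k :=
  Matrix.of (Fin.cases (motive := fun _ => Fin (n + 1) → k)
    (Fin.cons 1 (fun _ => 0)) (fun a => Fin.cons 0 (fun b => S a b)))

/-- The element `z ⊗ w ∈ V̂^{⊗(d+1)}` for `w ∈ V^{⊗d}`, where `V̂ = kz ⊕ V`,
`z` is the basis vector with index `0` and `V` embeds via `Fin.succ`. -/
noncomputable def zTensor (k : Type*) [Field k] (n d : ℕ) (w : Tens k n d) :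
    Tens k (n + 1) (d + 1) :=
  fun i => (if i 0 = 0 then (1 : k) else 0) *
    ∑ j : Fin d → Fin n, (∏ p, if i p.succ = (j p).succ then (1 : k) else 0) * w j

/-!
Evaluate `ŵ` at an index whose last `d - 1` entries lie in `V`. The summand `m` of `ŵ` carries
the factor `z`, which `τ^m` moves to position `m`, so only `m = 0, 1` survive, and
`∂_Ψ ŵ = Σ_i Ψ(y_i) (z ⊗ x_i - σ(x_i) ⊗ z)`. This gives one inclusion. For the other, take
for `Ψ` the pure tensors of dual basis vectors: the vectors `(Ψ(y_i))_i` they produce are the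
columns of the matrix with rows `y_i`, which span `kⁿ` because the `y_i` are linearly
independent.
-/

section

variable {k : Type*} [Field k]

theorem LinearIndependent.mem_of_forall_sum_smul_mem {ι α M : Type*} [Fintype ι]
    [AddCommGroup M] [Module k M] {y : ι → α → k} (hy : LinearIndependent k y)
    {v : ι → M} {N : Submodule k M} (h : ∀ a, ∑ i, y i a • v i ∈ N) (l : ι) : v l ∈ N := by
  classical
  have hspan : Submodule.span k (Set.range (flip y)) ≤
      N.comap (Fintype.linearCombination k v) := by
    rw [Submodule.span_le]
    rintro _ ⟨a, rfl⟩
    exact h a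
  rw [span_flip_eq_top_iff_linearIndependent.2 hy] at hspan
  simpa [Fintype.linearCombination_apply, Pi.single_apply] using
    hspan (Submodule.mem_top (x := Pi.single l 1))

theorem sum_prod_cons_zero_mul {N d : ℕ} (ps : Fin d → Fin N → k)
    (F : (Fin d → Fin (N + 1)) → k) :
    ∑ j : Fin d → Fin (N + 1), (∏ p, Fin.cons (α := fun _ => k) 0 (ps p) (j p)) * F j
      = ∑ j : Fin d → Fin N, (∏ p, ps p (j p)) * F (Fin.succ ∘ j) := by
  symm
  refine Fintype.sum_of_injective (fun j => Fin.succ ∘ j) (Fin.succ_injective _).comp_left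
    _ _ (fun j hj => ?_) (fun j => by simp only [Function.comp_apply, Fin.cons_succ])
  obtain ⟨p, hp⟩ : ∃ p, j p = 0 := by
    by_contra! h
    exact hj ⟨fun p => (j p).pred (h p), funext fun p => Fin.succ_pred _ _⟩
  rw [Finset.prod_eq_zero (Finset.mem_univ p) (by rw [hp, Fin.cons_zero]), zero_mul]

def tauPerm (d a : ℕ) : ℕ → Equiv.Perm (Fin d)
  | 0 => 1
  | m + 1 => adjSwap d (a + m) * tauPerm d a m

theorem tauMapFrom_eq_permMap (N d a m : ℕ) :
    tauMapFrom k N d a m = permMap k N d (tauPerm d a m) := by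
  induction m with
  | zero => rfl
  | succ m ih => exact LinearMap.ext fun Y => by rw [tauMapFrom, LinearMap.comp_apply, ih]; rfl

theorem tauPerm_apply_self {d a m : ℕ} (h : a + m < d) :
    tauPerm d a m ⟨a, by omega⟩ = ⟨a + m, h⟩ := by
  induction m with
  | zero => rfl
  | succ m ih =>
    rw [tauPerm, Equiv.Perm.mul_apply, ih (by omega), adjSwap, dif_pos (by omega)]
    exact Equiv.swap_apply_left _ _

theorem cons_cons_comp_adjSwap_zero {α : Type*} {d : ℕ} (a b : α) (t : Fin d → α) :
    (Fin.cons a (Fin.cons b t : Fin (d + 1) → α) : Fin (d + 2) → α) ∘ adjSwap (d + 2) 0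
      = Fin.cons b (Fin.cons a t : Fin (d + 1) → α) := by
  funext p
  rw [adjSwap, dif_pos (by omega)]
  refine Fin.cases ?_ (Fin.cases ?_ fun q => ?_) p
  · rfl
  · rfl
  · rw [Function.comp_apply, Equiv.swap_apply_of_ne_of_ne] <;> simp [Fin.ext_iff]

theorem blockMap_apply {N d : ℕ} (M : Matrix (Fin N) (Fin N) k) (P : Fin d → Prop)
    [DecidablePred P] (Y : Tens k N d) (i : Fin d → Fin N) :
    blockMap k N d M P Y i = ∑ j : Fin d → Fin N,
      (∏ p, if P p then M (i p) (j p) else if i p = j p then 1 else 0) * Y j := rfl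

theorem blockMap_of_forall_not {N d : ℕ} (M : Matrix (Fin N) (Fin N) k) {P : Fin d → Prop}
    [DecidablePred P] (hP : ∀ p, ¬ P p) : blockMap k N d M P = LinearMap.id := by
  refine LinearMap.ext fun Y => funext fun i => ?_
  simp [blockMap_apply, hP, Finset.prod_boole, ← funext_iff]

theorem blockMap_apply_eq_zero {N d : ℕ} (M : Matrix (Fin N) (Fin N) k) {P : Fin d → Prop}
    [DecidablePred P] {Y : Tens k N d} {q : Fin d} {c : Fin N} (hP : ¬ P q)
    (hY : ∀ j, j q ≠ c → Y j = 0) {i : Fin d → Fin N} (hi : i q ≠ c) :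
    blockMap k N d M P Y i = 0 := by
  refine Finset.sum_eq_zero fun j _ => ?_
  by_cases hj : j q = c
  · rw [Finset.prod_eq_zero (Finset.mem_univ q) (by rw [if_neg hP, if_neg (hj ▸ hi)]), zero_mul]
  · rw [hY j hj, mul_zero]

theorem blockMap_apply_of_forall_iff_eq {N d : ℕ} (M : Matrix (Fin N) (Fin N) k)
    {P : Fin d → Prop} [DecidablePred P] {q : Fin d} (hP : ∀ p, P p ↔ p = q)
    (Y : Tens k N d) (i : Fin d → Fin N) :
    blockMap k N d M P Y i = ∑ c, M (i q) c * Y (Function.update i q c) := by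
  classical
  have hterm : ∀ j : Fin d → Fin N,
      (∏ p, if P p then M (i p) (j p) else if i p = j p then 1 else 0) * Y j
        = ∑ c, if j = Function.update i q c then M (i q) c * Y j else 0 := by
    intro j
    by_cases hj : ∀ p ≠ q, j p = i p
    · have hupd : j = Function.update i q (j q) := Function.eq_update_iff.2 ⟨rfl, hj⟩
      rw [Fintype.prod_eq_single q fun p hp => by
          rw [if_neg (by simpa [hP] using hp), if_pos (hj p hp).symm],
        if_pos ((hP q).2 rfl), Finset.sum_eq_single (j q) (fun c _ hc => if_neg fun h => hc
          (by rw [h, Function.update_self])) (by simp), if_pos hupd]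
    · obtain ⟨p, hpq, hp⟩ : ∃ p, p ≠ q ∧ j p ≠ i p := by simpa using hj
      rw [Finset.prod_eq_zero (Finset.mem_univ p)
        (by rw [if_neg (by simpa [hP] using hpq), if_neg (Ne.symm hp)]), zero_mul]
      exact (Finset.sum_eq_zero fun c _ =>
        if_neg fun h => hp (by rw [h, Function.update_of_ne hpq])).symm
  rw [blockMap_apply, Finset.sum_congr rfl fun j _ => hterm j, Finset.sum_comm]
  simp

theorem zTensor_apply_of_ne_zero {n d : ℕ} (w : Tens k n d) {i : Fin (d + 1) → Fin (n + 1)}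
    (hi : i 0 ≠ 0) : zTensor k n d w i = 0 := by
  rw [zTensor, if_neg hi, zero_mul]

theorem zTensor_apply_of_succ_eq_zero {n d : ℕ} (w : Tens k n d)
    {i : Fin (d + 1) → Fin (n + 1)} {p : Fin d} (hp : i p.succ = 0) : zTensor k n d w i = 0 := by
  rw [zTensor, Finset.sum_eq_zero fun j _ => ?_, mul_zero]
  exact mul_eq_zero_of_left (Finset.prod_eq_zero (Finset.mem_univ p)
    (if_neg (by rw [hp]; exact (Fin.succ_ne_zero _).symm))) _

theorem zTensor_cons_succ {n d : ℕ} (w : Tens k n d) (a : Fin (n + 1)) (j : Fin d → Fin n) :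
    zTensor k n d w (Fin.cons a (Fin.succ ∘ j)) = if a = 0 then w j else 0 := by
  simp [zTensor, Fin.succ_inj, Finset.prod_boole, ← funext_iff]

/-- The element `ŵ ∈ V̂^{⊗(d+1)}` built from `w ∈ V^{⊗d}`. -/
noncomputable def liftPotential (n d : ℕ) (S : Matrix (Fin n) (Fin n) k) (w : Tens k n d) :
    Tens k (n + 1) (d + 1) :=
  ∑ m ∈ Finset.range (d + 1), ((-1 : k) ^ m) •
    tauMapFrom k (n + 1) (d + 1) 0 m
      (blockMap k (n + 1) (d + 1) (extMatrix k n S)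
        (fun p => 1 ≤ (p : ℕ) ∧ (p : ℕ) ≤ m) (zTensor k n d w))

/-- `z ⊗ x_i - σ(x_i) ⊗ z`. -/
def twistedCommutator {n : ℕ} (S : Matrix (Fin n) (Fin n) k) (i : Fin n) : Tens k (n + 1) 2 :=
  fun idx => (if idx 0 = 0 ∧ idx 1 = Fin.succ i then (1 : k) else 0)
    - ∑ a : Fin n, S a i * (if idx 0 = Fin.succ a ∧ idx 1 = 0 then (1 : k) else 0)

variable {n d : ℕ}

theorem zTensor_cons_cons_succ (w : Tens k n (d + 1)) (a b : Fin (n + 1)) (j : Fin d → Fin n) :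
    zTensor k n (d + 1) w (Fin.cons a (Fin.cons b (Fin.succ ∘ j)))
      = ∑ c, w (Fin.cons c j) * if a = 0 ∧ b = Fin.succ c then 1 else 0 := by
  refine Fin.cases ?_ (fun c => ?_) b
  · rw [zTensor_apply_of_succ_eq_zero w (p := 0) rfl]
    simp [eq_comm (a := (0 : Fin (n + 1)))]
  · rw [← Fin.comp_cons, zTensor_cons_succ]
    simp [Fin.succ_inj, ite_and]

theorem blockMap_extMatrix_zTensor (S : Matrix (Fin n) (Fin n) k) (w : Tens k n (d + 1))
    (a b : Fin (n + 1)) (j : Fin d → Fin n) :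
    blockMap k (n + 1) (d + 2) (extMatrix k n S) (fun p => 1 ≤ (p : ℕ) ∧ (p : ℕ) ≤ 1)
        (zTensor k n (d + 1) w) (Fin.cons b (Fin.cons a (Fin.succ ∘ j)))
      = ∑ c, w (Fin.cons c j) * ∑ t, S t c * if a = Fin.succ t ∧ b = 0 then 1 else 0 := by
  rw [blockMap_apply_of_forall_iff_eq _ (q := 1) (fun p => by simp [Fin.ext_iff]; omega)]
  rw [Fin.sum_univ_succ, ← Fin.succ_zero_eq_one, ← Fin.cons_update, Fin.update_cons_zero,
    zTensor_apply_of_succ_eq_zero w (p := 0) rfl, mul_zero, zero_add]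
  refine Finset.sum_congr rfl fun c _ => ?_
  rw [← Fin.cons_update, Fin.update_cons_zero, Fin.cons_succ, Fin.cons_zero, ← Fin.comp_cons,
    zTensor_cons_succ]
  refine Fin.cases ?_ (fun t => ?_) a
  · simp [extMatrix, (Fin.succ_ne_zero _).symm]
  · simp [extMatrix, Fin.succ_inj, ite_and, mul_comm]

theorem liftPotential_apply (S : Matrix (Fin n) (Fin n) k) (w : Tens k n d)
    (i : Fin (d + 1) → Fin (n + 1)) :
    liftPotential n d S w i = ∑ m ∈ Finset.range (d + 1), (-1 : k) ^ m *
      blockMap k (n + 1) (d + 1) (extMatrix k n S) (fun p => 1 ≤ (p : ℕ) ∧ (p : ℕ) ≤ m)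
        (zTensor k n d w) (i ∘ tauPerm (d + 1) 0 m) := by
  simp only [liftPotential, Finset.sum_apply, tauMapFrom_eq_permMap]
  rfl

theorem liftPotential_cons_cons_succ (S : Matrix (Fin n) (Fin n) k) (w : Tens k n (d + 1))
    (idx : Fin 2 → Fin (n + 1)) (j : Fin d → Fin n) :
    liftPotential n (d + 1) S w (Fin.cons (idx 0) (Fin.cons (idx 1) (Fin.succ ∘ j)))
      = ∑ c, w (Fin.cons c j) * twistedCommutator S c idx := by
  rw [liftPotential_apply, Finset.sum_range_succ', Finset.sum_range_succ',
    Finset.sum_eq_zero fun m hm => ?_]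
  · have hswap : tauPerm (d + 2) 0 (0 + 1) = adjSwap (d + 2) 0 := mul_one _
    rw [hswap, cons_cons_comp_adjSwap_zero, blockMap_extMatrix_zTensor,
      tauPerm, Equiv.Perm.coe_one, Function.comp_id,
      blockMap_of_forall_not _ (fun p => by omega), LinearMap.id_apply, zTensor_cons_cons_succ]
    simp only [twistedCommutator, mul_sub, Finset.sum_sub_distrib]
    ring
  · -- the factor `z` sits at position `m + 2` of the permuted index, where the entry is in `V`
    have hm : m + 2 < d + 2 := by simpa using hm
    refine mul_eq_zero_of_right _ (blockMap_apply_eq_zero _ (q := 0) (c := 0) (by simp)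
      (fun _ => zTensor_apply_of_ne_zero w) ?_)
    rw [Function.comp_apply, show (0 : Fin (d + 2)) = ⟨0, by omega⟩ from rfl,
      tauPerm_apply_self (by simpa using hm)]
    exact Fin.succ_ne_zero _

/-- `∂_Ψ u` for `Ψ = ψ_1 ⊗ ⋯ ⊗ ψ_d`, each `ψ_p ∈ V*` extended to `V̂` by `z ↦ 0`. -/
def pureDeriv (ps : Fin d → Fin n → k) (u : Tens k (n + 1) (d + 2)) : Tens k (n + 1) 2 :=
  fun idx => ∑ j : Fin d → Fin (n + 1),
    (∏ p, Fin.cons (α := fun _ => k) (0 : k) (ps p) (j p)) *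
      u (Fin.cons (idx 0) (Fin.cons (idx 1) j))

theorem pureDeriv_liftPotential (S : Matrix (Fin n) (Fin n) k) (w : Tens k n (d + 1))
    (ps : Fin d → Fin n → k) :
    pureDeriv ps (liftPotential n (d + 1) S w)
      = ∑ c, (∑ j, (∏ p, ps p (j p)) * w (Fin.cons c j)) • twistedCommutator S c := by
  funext idx
  simp only [pureDeriv, sum_prod_cons_zero_mul, liftPotential_cons_cons_succ, Finset.sum_apply,
    Pi.smul_apply, smul_eq_mul, Finset.mul_sum, Finset.sum_mul]
  rw [Finset.sum_comm]
  simp only [mul_assoc]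

theorem pureDeriv_single_liftPotential (S : Matrix (Fin n) (Fin n) k) (w : Tens k n (d + 1))
    (j : Fin d → Fin n) :
    pureDeriv (fun p => Pi.single (j p) 1) (liftPotential n (d + 1) S w)
      = ∑ c, w (Fin.cons c j) • twistedCommutator S c := by
  rw [pureDeriv_liftPotential]
  simp [Pi.single_apply, Finset.prod_boole, ← funext_iff, eq_comm]

end

theorem stmt12_general (k : Type*) [Field k] (n e : ℕ)
    (S : Matrix (Fin n) (Fin n) k)
    (w : Tens k n (e + 2))
    (hind : LinearIndependent k
      (fun i : Fin n => (fun rest : Fin (e + 1) → Fin n => w (Fin.cons i rest))))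
    (what : Tens k (n + 1) (e + 3))
    (hwhat : what = ∑ m ∈ Finset.range (e + 3), ((-1 : k) ^ m) •
      tauMapFrom k (n + 1) (e + 3) 0 m
        (blockMap k (n + 1) (e + 3) (extMatrix k n S)
          (fun p => 1 ≤ (p : ℕ) ∧ (p : ℕ) ≤ m) (zTensor k n (e + 2) w))) :
    Submodule.span k {u : Tens k (n + 1) 2 | ∃ ps : Fin (e + 1) → (Fin n → k),
        u = fun idx => ∑ j : Fin (e + 1) → Fin (n + 1),
          (∏ p, Fin.cons (α := fun _ => k) (0 : k) (ps p) (j p)) *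
            what (Fin.cons (idx 0) (Fin.cons (idx 1) j))}
      = Submodule.span k (Set.range (fun i : Fin n => (fun idx : Fin 2 → Fin (n + 1) =>
          (if idx 0 = 0 ∧ idx 1 = Fin.succ i then (1 : k) else 0)
            - ∑ a : Fin n, S a i *
                (if idx 0 = Fin.succ a ∧ idx 1 = 0 then (1 : k) else 0)))) := by
  change what = liftPotential n (e + 2) S w at hwhat
  change Submodule.span k {u | ∃ ps, u = pureDeriv ps what}
    = Submodule.span k (Set.range (twistedCommutator S))
  subst hwhat
  refine le_antisymm (Submodule.span_le.2 ?_) (Submodule.span_le.2 ?_)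
  · rintro _ ⟨ps, rfl⟩
    rw [pureDeriv_liftPotential]
    exact Submodule.sum_mem _ fun c _ => Submodule.smul_mem _ _ (Submodule.subset_span ⟨c, rfl⟩)
  · rintro _ ⟨l, rfl⟩
    refine hind.mem_of_forall_sum_smul_mem (fun j => Submodule.subset_span ?_) l
    exact ⟨fun p => Pi.single (j p) 1, (pureDeriv_single_liftPotential S w j).symm⟩

/-- let `w ∈ V^{⊗(e+2)}` be a twisted superpotential with respect to `σ`
(matrix `S`), written `w = Σ_i x_i ⊗ y_i` with the `y_i` linearly independent, and let
`ŵ ∈ V̂^{⊗(e+3)}` be the associated superpotential (`V̂ = kz ⊕ V`).  Then the span of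
the partial derivatives `∂_Ψ(ŵ) = (1⊗1⊗Ψ)(ŵ)`, over all `Ψ ∈ (V^*)^{⊗(e+1)}`
(extended to `V̂^*` by `z ↦ 0`), equals the span of the elements
`z ⊗ x_i - σ(x_i) ⊗ z`, `i = 1,…,n`, inside `V̂ ⊗ V̂`. -/
theorem stmt12 (k : Type*) [Field k] (n e : ℕ)
    (S : Matrix (Fin n) (Fin n) k) (hS : IsUnit S.det)
    (w : Tens k n (e + 2))
    (hw : w = ((-1 : k) ^ (e + 1)) •
      tauMapFrom k n (e + 2) 0 (e + 1) (blockMap k n (e + 2) S (fun p => (p : ℕ) = 0) w))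
    (hind : LinearIndependent k
      (fun i : Fin n => (fun rest : Fin (e + 1) → Fin n => w (Fin.cons i rest))))
    (what : Tens k (n + 1) (e + 3))
    (hwhat : what = ∑ m ∈ Finset.range (e + 3), ((-1 : k) ^ m) •
      tauMapFrom k (n + 1) (e + 3) 0 m
        (blockMap k (n + 1) (e + 3) (extMatrix k n S)
          (fun p => 1 ≤ (p : ℕ) ∧ (p : ℕ) ≤ m) (zTensor k n (e + 2) w))) :
    Submodule.span k {u : Tens k (n + 1) 2 | ∃ ps : Fin (e + 1) → (Fin n → k),
        u = fun idx => ∑ j : Fin (e + 1) → Fin (n + 1),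
          (∏ p, Fin.cons (α := fun _ => k) (0 : k) (ps p) (j p)) *
            what (Fin.cons (idx 0) (Fin.cons (idx 1) j))}
      = Submodule.span k (Set.range (fun i : Fin n => (fun idx : Fin 2 → Fin (n + 1) =>
          (if idx 0 = 0 ∧ idx 1 = Fin.succ i then (1 : k) else 0)
            - ∑ a : Fin n, S a i *
                (if idx 0 = Fin.succ a ∧ idx 1 = 0 then (1 : k) else 0)))) :=
  stmt12_general k n e S w hind what hwhat
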